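/- arXiv:1607.08875 — 3 statements merged into one kernel-verified Lean document; each statement's English description precedes it below -/
import Mathlib

section
/- Let E ∈ C⁴(ℝ^N) and let Ω ⊂ ℝ^N be compact with λ1(x) < 0 < λ2(x) for all x ∈ Ω; set g = min_{x∈Ω} min(−λ1(x), λ2(x)) > 0, and suppose ‖∇E‖ ≤ L on Ω. Then there exist constants C1, C2 > 0 (depending only on E, Ω, L, g) such that, along any solution (x(t), v(t)) of the ε-GAD with x(t) ∈ Ω and v(t) a unit vector, d/dt ½‖v(t) − v1(x(t))‖² ≤ ε^{−2} (−g + C1 ‖v(t) − v1(x(t))‖) ‖v(t) − v1(x(t))‖² + C2 ‖v(t) − v1(x(t))‖, where v1(x) is the sign choice of the first eigenvector closest to v(t). -/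
open Real Filter Set
open scoped Topology RealInnerProductSpace

noncomputable section
abbrev Vec (N : ℕ) := EuclideanSpace ℝ (Fin N)

noncomputable def hessCLM {N : ℕ} (E : Vec N → ℝ) (x : Vec N) : Vec N →L[ℝ] Vec N :=
  fderiv ℝ (gradient E) x

noncomputable def hessOp {N : ℕ} (E : Vec N → ℝ) (x : Vec N) : Module.End ℝ (Vec N) :=
  (hessCLM E x).toLinearMap

def IsMinEigen {N : ℕ} (T : Module.End ℝ (Vec N)) (lam : ℝ) : Prop :=
  T.HasEigenvalue lam ∧ ∀ μ : ℝ, T.HasEigenvalue μ → lam ≤ μ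

def IsMinEigvec {N : ℕ} (T : Module.End ℝ (Vec N)) (w : Vec N) : Prop :=
  ‖w‖ = 1 ∧ ∃ lam : ℝ, IsMinEigen T lam ∧ T w = lam • w

def TwoSmallestEigen {N : ℕ} (T : Module.End ℝ (Vec N)) (lam1 lam2 : ℝ) : Prop :=
  T.HasEigenvalue lam1 ∧ T.HasEigenvalue lam2 ∧ lam1 ≤ lam2 ∧
    (∀ μ : ℝ, T.HasEigenvalue μ → lam1 ≤ μ) ∧
    (∀ μ : ℝ, T.HasEigenvalue μ → μ = lam1 ∨ lam2 ≤ μ) ∧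
    (lam1 < lam2 → Module.finrank ℝ (T.eigenspace lam1) = 1)

/-- the reflection `(I - 2 w ⊗ w) u`. -/
def reflect {N : ℕ} (w u : Vec N) : Vec N := u - (2 * ⟪w, u⟫) • w

/-- ISD vector field with eigendirection `w`. -/
noncomputable def isdField {N : ℕ} (E : Vec N → ℝ) (x w : Vec N) : Vec N :=
  -(reflect w (gradient E x))

def IsISDSolOn {N : ℕ} (E : Vec N → ℝ) (x : ℝ → Vec N) (s : Set ℝ) : Prop :=
  ∀ t ∈ s, ∃ w : Vec N, IsMinEigvec (hessOp E (x t)) w ∧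
    HasDerivAt x (isdField E (x t) w) t

noncomputable def gadVField {N : ℕ} (E : Vec N → ℝ) (x v : Vec N) : Vec N :=
  -(hessCLM E x v) + ⟪v, hessCLM E x v⟫ • v

def IsGADSolOn {N : ℕ} (E : Vec N → ℝ) (ε : ℝ) (x v : ℝ → Vec N) (s : Set ℝ) : Prop :=
  ∀ t ∈ s, ‖v t‖ = 1 ∧ HasDerivAt x (-(reflect (v t) (gradient E (x t)))) t ∧
    HasDerivAt v ((ε ^ 2)⁻¹ • gadVField E (x t) (v t)) t

def IsIndexOneSaddle {N : ℕ} (E : Vec N → ℝ) (x : Vec N) : Prop :=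
  gradient E x = 0 ∧ ∃ lam1 lam2 : ℝ,
    TwoSmallestEigen (hessOp E x) lam1 lam2 ∧ lam1 < 0 ∧ 0 < lam2

end

/-!
Write `c = ⟪v, w⟫` and `r = ‖v - w‖`, so that `r² = 2 - 2c`. The GAD field is orthogonal to `v`,
and its component along `w` is `c (λ₁ - ⟪v, ∇²E v⟫)`; since `∇²E ≥ λ₂` on `w⊥`, this is at most
`-2g c (1 - c²) ≤ g (2r - 1) r²`. As `λ₁` is simple, the implicit function theorem makes `w`
differentiable along the trajectory; differentiating `∇²E(x) w = λ₁ w` and using the gap on `w⊥`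
once more gives `(λ₂ - λ₁) ‖ẇ‖ ≤ ‖D³E(x)[ẋ, w]‖ ≤ M L`, where `M` bounds `D³E` on the compact `Ω`
and `‖ẋ‖ = ‖∇E‖` because `ẋ` is a reflection of `-∇E`.
-/

section SpectralGap

variable {V : Type*} [NormedAddCommGroup V] [InnerProductSpace ℝ V]

lemma exists_smul_eq_of_finrank_eigenspace_eq_one {T : Module.End ℝ V} {lam : ℝ}
    (h : Module.finrank ℝ (T.eigenspace lam) = 1) {w z : V} (hw : T w = lam • w) (hw0 : w ≠ 0)
    (hz : z ∈ T.eigenspace lam) : ∃ c : ℝ, c • w = z := by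
  have hwS : w ∈ T.eigenspace lam := Module.End.mem_eigenspace_iff.2 hw
  obtain ⟨c, hc⟩ := (finrank_eq_one_iff_of_nonzero' (⟨w, hwS⟩ : T.eigenspace lam)
    (by simpa using hw0)).1 h ⟨z, hz⟩
  exact ⟨c, congrArg Subtype.val hc⟩

lemma eq_zero_of_sub_smul_sub_smul_eq_zero {T : Module.End ℝ V} (hT : T.IsSymmetric)
    {lam : ℝ} (hsimple : Module.finrank ℝ (T.eigenspace lam) = 1)
    {w : V} (hw : T w = lam • w) (hw0 : w ≠ 0) {u : V} {μ : ℝ}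
    (h : T u - lam • u - μ • w = 0) (hu : ⟪w, u⟫ = 0) : u = 0 ∧ μ = 0 := by
  have hμ : μ = 0 := by
    have h' := congrArg (⟪w, ·⟫) h
    simp only [inner_sub_right, inner_smul_right, inner_zero_right, ← hT w u, hw,
      inner_smul_left, hu] at h'
    simpa [hw0] using h'
  subst hμ
  obtain ⟨c, rfl⟩ := exists_smul_eq_of_finrank_eigenspace_eq_one hsimple hw hw0
    (Module.End.mem_eigenspace_iff.2 (by simpa [sub_eq_zero] using h))
  simp [real_inner_smul_right, hw0] at hu
  simp [hu]

variable [FiniteDimensional ℝ V]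

lemma LinearMap.IsSymmetric.mul_norm_sq_le_inner_of_orthogonal {T : Module.End ℝ V}
    (hT : T.IsSymmetric) {lam1 lam2 : ℝ}
    (hspec : ∀ μ, T.HasEigenvalue μ → μ = lam1 ∨ lam2 ≤ μ) {u : V}
    (hu : ∀ z ∈ T.eigenspace lam1, ⟪z, u⟫ = 0) : lam2 * ‖u‖ ^ 2 ≤ ⟪u, T u⟫ := by
  set b := hT.eigenvectorBasis rfl
  set μ := hT.eigenvalues rfl
  have hTu : ⟪u, T u⟫ = ∑ i, μ i * ⟪b i, u⟫ ^ 2 := by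
    rw [← b.sum_inner_mul_inner u (T u)]
    refine Finset.sum_congr rfl fun i _ => ?_
    rw [← hT, hT.apply_eigenvectorBasis, real_inner_smul_left, real_inner_comm u]
    simp only [RCLike.ofReal_real_eq_id, id_eq, b, μ]
    ring
  have hnu : ‖u‖ ^ 2 = ∑ i, ⟪b i, u⟫ ^ 2 := by
    rw [← real_inner_self_eq_norm_sq, ← b.sum_inner_mul_inner u u]
    refine Finset.sum_congr rfl fun i _ => ?_
    rw [real_inner_comm]
    ring
  rw [hTu, hnu, Finset.mul_sum]
  refine Finset.sum_le_sum fun i _ => ?_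
  rcases hspec (μ i) (hT.hasEigenvalue_eigenvalues rfl i) with h | h
  · have hbi : b i ∈ T.eigenspace lam1 := by
      rw [Module.End.mem_eigenspace_iff, ← h]
      exact hT.apply_eigenvectorBasis rfl i
    simp [hu _ hbi]
  · exact mul_le_mul_of_nonneg_right h (sq_nonneg _)

end SpectralGap

section GapEstimates

variable {V : Type*} [NormedAddCommGroup V] [InnerProductSpace ℝ V] {T : Module.End ℝ V}
  {lam1 lam2 : ℝ} {w : V}

lemma mul_norm_le_of_inner_eq_zero (hgap : ∀ u, ⟪w, u⟫ = 0 → lam2 * ‖u‖ ^ 2 ≤ ⟪u, T u⟫)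
    {u z : V} {a : ℝ} (hu : ⟪w, u⟫ = 0) (h : T u = lam1 • u + a • w + z) :
    (lam2 - lam1) * ‖u‖ ≤ ‖z‖ := by
  rcases (norm_nonneg u).eq_or_lt with hu0 | hu0
  · simp [← hu0]
  have key : (lam2 - lam1) * ‖u‖ ^ 2 ≤ ‖u‖ * ‖z‖ := by
    have hz : ⟪u, z⟫ ≤ ‖u‖ * ‖z‖ := real_inner_le_norm u z
    have := hgap u hu
    rw [h, inner_add_right, inner_add_right, real_inner_smul_right, real_inner_smul_right,
      real_inner_comm w u, hu, real_inner_self_eq_norm_sq] at this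
    linarith
  nlinarith

lemma le_inner_apply_of_norm_eq_one (hT : T.IsSymmetric)
    (hgap : ∀ u, ⟪w, u⟫ = 0 → lam2 * ‖u‖ ^ 2 ≤ ⟪u, T u⟫) (hw : ‖w‖ = 1)
    (hTw : T w = lam1 • w) {v : V} (hv : ‖v‖ = 1) :
    lam1 * ⟪v, w⟫ ^ 2 + lam2 * (1 - ⟪v, w⟫ ^ 2) ≤ ⟪v, T v⟫ := by
  set u := v - ⟪v, w⟫ • w
  have hww : ⟪w, w⟫ = 1 := by rw [real_inner_self_eq_norm_sq, hw]; norm_num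
  have hu : ⟪w, u⟫ = 0 := by
    rw [inner_sub_right, real_inner_smul_right, hww, real_inner_comm]; ring
  have hnu : ‖u‖ ^ 2 = 1 - ⟪v, w⟫ ^ 2 := by
    rw [norm_sub_sq_real, real_inner_smul_right, norm_smul, hv, hw, Real.norm_eq_abs, mul_one,
      sq_abs]
    ring
  have hTu : ⟪w, T u⟫ = 0 := by rw [← hT w u, hTw, real_inner_smul_left, hu, mul_zero]
  have hvTv : ⟪v, T v⟫ = lam1 * ⟪v, w⟫ ^ 2 + ⟪u, T u⟫ := by
    have hv' : v = ⟪v, w⟫ • w + u := by simp [u]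
    conv_lhs => rw [hv']
    simp only [map_add, map_smul, inner_add_left, inner_add_right, real_inner_smul_left,
      real_inner_smul_right, hTu, hTw, hww, real_inner_comm w u, hu]
    ring
  have := hgap u hu
  rw [hnu] at this
  linarith

lemma neg_two_mul_mul_one_sub_sq_le {c r : ℝ} (hc0 : 0 ≤ c) (hc1 : c ≤ 1) (hr : 0 ≤ r)
    (hr2 : r ^ 2 = 2 - 2 * c) : -2 * c * (1 - c ^ 2) ≤ (2 * r - 1) * r ^ 2 := by
  nlinarith [sq_nonneg (1 - c), mul_nonneg hr (sq_nonneg (r - 1)), mul_nonneg hc0 hr]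

lemma inner_sub_gad_le (hT : T.IsSymmetric)
    (hgap : ∀ u, ⟪w, u⟫ = 0 → lam2 * ‖u‖ ^ 2 ≤ ⟪u, T u⟫) (hw : ‖w‖ = 1)
    (hTw : T w = lam1 • w) {v : V} (hv : ‖v‖ = 1) (hvw : 0 ≤ ⟪v, w⟫) {g : ℝ} (hg : 0 ≤ g)
    (h1 : lam1 ≤ -g) (h2 : g ≤ lam2) :
    ⟪v - w, -(T v) + ⟪v, T v⟫ • v⟫ ≤ (-g + 2 * g * ‖v - w‖) * ‖v - w‖ ^ 2 := by
  have hvv : ⟪v, v⟫ = 1 := by rw [real_inner_self_eq_norm_sq, hv]; norm_num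
  have hwTv : ⟪w, T v⟫ = lam1 * ⟪v, w⟫ := by
    rw [← hT w v, hTw, real_inner_smul_left, real_inner_comm]
  have hgad : ⟪v - w, -(T v) + ⟪v, T v⟫ • v⟫ = ⟪v, w⟫ * (lam1 - ⟪v, T v⟫) := by
    simp only [inner_sub_left, inner_add_right, inner_neg_right, real_inner_smul_right, hvv,
      hwTv, real_inner_comm w v]
    ring
  have hc1 : ⟪v, w⟫ ≤ 1 := by simpa [hv, hw] using real_inner_le_norm v w
  have hr2 : ‖v - w‖ ^ 2 = 2 - 2 * ⟪v, w⟫ := by rw [norm_sub_sq_real, hv, hw]; ring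
  have hq := le_inner_apply_of_norm_eq_one hT hgap hw hTw hv
  have hc : 0 ≤ ⟪v, w⟫ * (1 - ⟪v, w⟫ ^ 2) := mul_nonneg hvw (by nlinarith)
  have hscalar := neg_two_mul_mul_one_sub_sq_le hvw hc1 (norm_nonneg (v - w)) hr2
  rw [hgad]
  nlinarith [mul_nonneg hc (by linarith : 0 ≤ lam2 - lam1 - 2 * g),
    mul_le_mul_of_nonneg_left hscalar hg]

lemma inner_sub_gad_deriv_le {g ε K : ℝ} {v w' : V}
    (hT : T.IsSymmetric) (hgap : ∀ u, ⟪w, u⟫ = 0 → lam2 * ‖u‖ ^ 2 ≤ ⟪u, T u⟫)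
    (hw : ‖w‖ = 1) (hTw : T w = lam1 • w) (hv : ‖v‖ = 1) (hvw : 0 ≤ ⟪v, w⟫) (hg : 0 ≤ g)
    (h1 : lam1 ≤ -g) (h2 : g ≤ lam2) (hw' : ‖w'‖ ≤ K) :
    ⟪v - w, (ε ^ 2)⁻¹ • (-(T v) + ⟪v, T v⟫ • v) - w'⟫
      ≤ (ε ^ 2)⁻¹ * ((-g + 2 * g * ‖v - w‖) * ‖v - w‖ ^ 2) + K * ‖v - w‖ := by
  rw [inner_sub_right, real_inner_smul_right]
  have hgad := mul_le_mul_of_nonneg_left (inner_sub_gad_le hT hgap hw hTw hv hvw hg h1 h2)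
    (inv_nonneg.2 (sq_nonneg ε))
  have hw'K : -⟪v - w, w'⟫ ≤ K * ‖v - w‖ := by
    nlinarith [neg_le_abs ⟪v - w, w'⟫, abs_real_inner_le_norm (v - w) w', norm_nonneg (v - w)]
  linarith

end GapEstimates

section Curves

variable {V : Type*} [NormedAddCommGroup V] [InnerProductSpace ℝ V]

lemma inner_eq_zero_of_hasDerivAt_of_norm_eq_one {w : ℝ → V} {w' : V} {t : ℝ}
    (hw : HasDerivAt w w' t) (h : ∀ᶠ τ in 𝓝 t, ‖w τ‖ = 1) : ⟪w t, w'⟫ = 0 := by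
  have hconst : HasDerivAt (‖w ·‖ ^ 2) 0 t :=
    (hasDerivAt_const t (1 : ℝ)).congr_of_eventuallyEq (by filter_upwards [h] with τ hτ; simp [hτ])
  have := hw.norm_sq.unique hconst
  linarith

lemma hasDerivAt_half_norm_sq_sub {v w : ℝ → V} {v' w' : V} {t : ℝ} (hv : HasDerivAt v v' t)
    (hw : HasDerivAt w w' t) :
    HasDerivAt (fun τ => (1 / 2 : ℝ) * ‖v τ - w τ‖ ^ 2) ⟪v t - w t, v' - w'⟫ t := by
  simpa only [Pi.sub_apply, one_div, inv_mul_cancel_left₀ (two_ne_zero (α := ℝ))] using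
    ((hv.sub hw).norm_sq).const_mul (1 / 2 : ℝ)

variable {F : Type*} [NormedAddCommGroup F] [NormedSpace ℝ F]

/-- `(w, λ)` is an eigenpair of `H y` with `‖w‖ = 1` iff `eigenEqn H (y, (w, λ)) = (0, 1)`. -/
def eigenEqn (H : F → V →L[ℝ] V) (q : F × (V × ℝ)) : V × ℝ :=
  (H q.1 q.2.1 - q.2.2 • q.2.1, ⟪q.2.1, q.2.1⟫)

variable [FiniteDimensional ℝ V]

lemma exists_hasStrictFDerivAt_eigenEqn {H : F → V →L[ℝ] V} {H' : F →L[ℝ] V →L[ℝ] V} {y : F}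
    (hH : HasStrictFDerivAt H H' y) (hsymm : (H y : Module.End ℝ V).IsSymmetric) {lam : ℝ}
    (hsimple : Module.finrank ℝ (Module.End.eigenspace (H y : Module.End ℝ V) lam) = 1) {w : V}
    (hw : H y w = lam • w) (hw0 : w ≠ 0) :
    ∃ f' : F × (V × ℝ) →L[ℝ] V × ℝ, HasStrictFDerivAt (eigenEqn H) f' (y, (w, lam)) ∧
      (f' ∘L ContinuousLinearMap.inr ℝ F (V × ℝ)).IsInvertible := by
  set q₀ : F × (V × ℝ) := (y, (w, lam))
  obtain ⟨f', hf, hf'⟩ : ∃ f' : F × (V × ℝ) →L[ℝ] V × ℝ, HasStrictFDerivAt (eigenEqn H) f' q₀ ∧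
      ∀ u μ, f' (0, (u, μ)) = (H y u - lam • u - μ • w, 2 * ⟪w, u⟫) := by
    have hu := (hasStrictFDerivAt_snd (𝕜 := ℝ) (p := q₀)).fst
    refine ⟨_, (((hH.comp q₀ hasStrictFDerivAt_fst).clm_apply hu).sub
      ((hasStrictFDerivAt_snd (𝕜 := ℝ) (p := q₀)).snd.smul hu)).prodMk (hu.inner ℝ hu),
      fun u μ => ?_⟩
    simp only [ContinuousLinearMap.prod_apply, sub_apply, add_apply, zero_apply, smul_apply,
      ContinuousLinearMap.comp_apply, ContinuousLinearMap.coe_snd', ContinuousLinearMap.coe_fst',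
      ContinuousLinearMap.flip_apply, ContinuousLinearMap.smulRight_apply, fderivInnerCLM_apply,
      map_zero, add_zero, Prod.mk.injEq]
    exact ⟨by rw [sub_sub], by rw [real_inner_comm u]; ring⟩
  have hinj : Function.Injective (f' ∘L ContinuousLinearMap.inr ℝ F (V × ℝ)) := by
    refine (injective_iff_map_eq_zero _).2 fun ⟨u, μ⟩ h => ?_
    rw [ContinuousLinearMap.comp_apply, ContinuousLinearMap.inr_apply, hf'] at h
    obtain ⟨h₁, h₂⟩ := Prod.mk_eq_zero.1 h
    obtain ⟨rfl, rfl⟩ := eq_zero_of_sub_smul_sub_smul_eq_zero hsymm hsimple hw hw0 h₁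
      (by simpa using h₂)
    rfl
  exact ⟨f', hf, (LinearEquiv.ofInjectiveEndo _ hinj).toContinuousLinearEquiv, rfl⟩

variable [CompleteSpace F]

theorem exists_hasDerivAt_of_simple_eigen {H : F → V →L[ℝ] V} {H' : F →L[ℝ] V →L[ℝ] V}
    {x : ℝ → F} {x' : F} {w : ℝ → V} {lam : ℝ → ℝ} {t₀ : ℝ}
    (hH : HasStrictFDerivAt H H' (x t₀)) (hx : HasDerivAt x x' t₀) (hw : ContinuousAt w t₀)
    (heig : ∀ᶠ τ in 𝓝 t₀, ‖w τ‖ = 1 ∧ H (x τ) (w τ) = lam τ • w τ)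
    (hsymm : (H (x t₀) : Module.End ℝ V).IsSymmetric)
    (hsimple : Module.finrank ℝ (Module.End.eigenspace (H (x t₀) : Module.End ℝ V) (lam t₀)) = 1) :
    ∃ w' lam', HasDerivAt w w' t₀ ∧ HasDerivAt lam lam' t₀ := by
  obtain ⟨hw₀, heig₀⟩ := heig.self_of_nhds
  obtain ⟨f', hf, hinv⟩ := exists_hasStrictFDerivAt_eigenEqn hH hsymm hsimple heig₀
    (ne_of_apply_ne norm (by simp [hw₀]))
  have hlam : ContinuousAt lam t₀ := by
    refine ContinuousAt.congr (hw.inner ((hH.continuousAt.comp hx.continuousAt).clm_apply hw)) ?_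
    filter_upwards [heig] with τ ⟨hτ₁, hτ₂⟩
    simp [hτ₂, real_inner_smul_right, hτ₁]
  set ψ := hf.implicitFunctionOfProdDomain hinv
  have hψ : (fun τ => (w τ, lam τ)) =ᶠ[𝓝 t₀] ψ ∘ x := by
    have hγ : Tendsto (fun τ => (x τ, (w τ, lam τ))) (𝓝 t₀) (𝓝 (x t₀, (w t₀, lam t₀))) :=
      hx.continuousAt.prodMk (hw.prodMk hlam)
    filter_upwards [hγ.eventually (hf.eventually_apply_eq_iff_implicitFunctionOfProdDomain hinv),
      heig] with τ hτ ⟨hτ₁, hτ₂⟩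
    refine (hτ.1 ?_).symm
    simp [eigenEqn, hτ₂, heig₀, hτ₁, hw₀]
  have hψx := ((hf.hasStrictFDerivAt_implicitFunctionOfProdDomain hinv).hasFDerivAt.comp_hasDerivAt
    t₀ hx).congr_of_eventuallyEq hψ
  exact ⟨_, _, hψx.fst, hψx.snd⟩

end Curves

section Hessian

variable {N : ℕ}

lemma contDiff_hessCLM {E : Vec N → ℝ} {n : ℕ} (hE : ContDiff ℝ (n + 2) E) :
    ContDiff ℝ n (hessCLM E) := by
  have hgrad : ContDiff ℝ (n + 1) (gradient E) := by
    change ContDiff ℝ (n + 1) ((InnerProductSpace.toDual ℝ (Vec N)).symm ∘ fderiv ℝ E)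
    exact (LinearIsometryEquiv.contDiff _).comp (hE.fderiv_right (by norm_cast))
  exact hgrad.fderiv_right le_rfl

lemma inner_hessCLM_apply (E : Vec N → ℝ) (x u v : Vec N) :
    ⟪hessCLM E x u, v⟫ = fderiv ℝ (fderiv ℝ E) x u v := by
  change ⟪fderiv ℝ ((InnerProductSpace.toDual ℝ (Vec N)).symm ∘ fderiv ℝ E) x u, v⟫ = _
  rw [LinearIsometryEquiv.comp_fderiv]
  exact InnerProductSpace.toDual_symm_apply

lemma isSymmetric_hessOp {E : Vec N → ℝ} {x : Vec N} (hE : ContDiffAt ℝ 2 E x) :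
    (hessOp E x).IsSymmetric := fun a b => by
  change ⟪hessCLM E x a, b⟫ = ⟪a, hessCLM E x b⟫
  rw [inner_hessCLM_apply, real_inner_comm, inner_hessCLM_apply]
  exact hE.isSymmSndFDerivAt (by simp) a b

lemma norm_reflect {w : Vec N} (hw : ‖w‖ = 1) (u : Vec N) : ‖reflect w u‖ = ‖u‖ := by
  have h : ‖reflect w u‖ ^ 2 = ‖u‖ ^ 2 := by
    rw [reflect, norm_sub_sq_real, norm_smul, real_inner_smul_right, hw, real_inner_comm,
      Real.norm_eq_abs]
    nlinarith [sq_abs (2 * ⟪u, w⟫)]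
  exact (pow_left_inj₀ (norm_nonneg _) (norm_nonneg _) two_ne_zero).1 h

lemma norm_fderiv_hessCLM_apply_reflect_le {E : Vec N → ℝ} {x v w : Vec N} {M L : ℝ}
    (hM : ‖fderiv ℝ (hessCLM E) x‖ ≤ M) (hL : ‖gradient E x‖ ≤ L) (hv : ‖v‖ = 1)
    (hw : ‖w‖ = 1) : ‖fderiv ℝ (hessCLM E) x (-reflect v (gradient E x)) w‖ ≤ M * L := by
  calc _ ≤ ‖fderiv ℝ (hessCLM E) x‖ * ‖-reflect v (gradient E x)‖ * ‖w‖ :=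
        ContinuousLinearMap.le_opNorm₂ _ _ _
    _ ≤ M * L := by
        rw [norm_neg, norm_reflect hv, hw, mul_one]
        exact mul_le_mul hM hL (norm_nonneg _) ((norm_nonneg (fderiv ℝ (hessCLM E) x)).trans hM)

lemma TwoSmallestEigen.mul_norm_sq_le_inner {T : Module.End ℝ (Vec N)} (hT : T.IsSymmetric)
    {lam1 lam2 : ℝ} (h : TwoSmallestEigen T lam1 lam2) (hlt : lam1 < lam2) {w : Vec N}
    (hw0 : w ≠ 0) (hTw : T w = lam1 • w) (u : Vec N) (hu : ⟪w, u⟫ = 0) :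
    lam2 * ‖u‖ ^ 2 ≤ ⟪u, T u⟫ := by
  refine hT.mul_norm_sq_le_inner_of_orthogonal h.2.2.2.2.1 fun z hz => ?_
  obtain ⟨c, rfl⟩ := exists_smul_eq_of_finrank_eigenspace_eq_one (h.2.2.2.2.2 hlt) hTw hw0 hz
  rw [real_inner_smul_left, hu, mul_zero]

lemma IsMinEigvec.apply_eq_smul {T : Module.End ℝ (Vec N)} {w : Vec N} (hw : IsMinEigvec T w)
    {lam1 lam2 : ℝ} (h : TwoSmallestEigen T lam1 lam2) : T w = lam1 • w := by
  obtain ⟨-, lam, ⟨hlam, hmin⟩, hTw⟩ := hw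
  rwa [le_antisymm (hmin _ h.1) (h.2.2.2.1 _ hlam)] at hTw

lemma exists_hasDerivAt_eigvec {E : Vec N → ℝ} (hE : ContDiff ℝ 3 E) {x w : ℝ → Vec N}
    {x' : Vec N} {lam : ℝ → ℝ} {lam2 t : ℝ} (hx : HasDerivAt x x' t) (hw : ContinuousAt w t)
    (heig : ∀ᶠ τ in 𝓝 t, ‖w τ‖ = 1 ∧ hessCLM E (x τ) (w τ) = lam τ • w τ)
    (h2 : TwoSmallestEigen (hessOp E (x t)) (lam t) lam2) (hlt : lam t < lam2) :
    ∃ w', HasDerivAt w w' t ∧ (lam2 - lam t) * ‖w'‖ ≤ ‖fderiv ℝ (hessCLM E) (x t) x' (w t)‖ := by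
  have hH : ContDiff ℝ 1 (hessCLM E) := contDiff_hessCLM hE
  have hsymm : (hessOp E (x t)).IsSymmetric :=
    isSymmetric_hessOp (hE.contDiffAt.of_le (by norm_num))
  obtain ⟨hw₁, hTw⟩ := heig.self_of_nhds
  obtain ⟨w', lam', hw', hlam'⟩ := exists_hasDerivAt_of_simple_eigen
    (hH.contDiffAt.hasStrictFDerivAt one_ne_zero) hx hw heig hsymm (h2.2.2.2.2.2 hlt)
  have hperp := inner_eq_zero_of_hasDerivAt_of_norm_eq_one hw' (heig.mono fun _ h => h.1)
  have hdiff : hessCLM E (x t) w' =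
      lam t • w' + lam' • w t + -(fderiv ℝ (hessCLM E) (x t) x' (w t)) := by
    have hHx : HasDerivAt (fun τ => hessCLM E (x τ)) (fderiv ℝ (hessCLM E) (x t) x') t :=
      (hH.differentiable one_ne_zero (x t)).hasFDerivAt.comp_hasDerivAt t hx
    have := (hHx.clm_apply hw').unique ((hlam'.smul hw').congr_of_eventuallyEq
      (heig.mono fun _ h => h.2))
    rw [← sub_eq_zero] at this ⊢
    rw [← this]
    abel
  refine ⟨w', hw', ?_⟩
  simpa using mul_norm_le_of_inner_eq_zero
    (h2.mul_norm_sq_le_inner hsymm hlt (ne_of_apply_ne norm (by simp [hw₁])) hTw) hperp hdiff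

end Hessian

theorem stmt5_general {N : ℕ} (E : Vec N → ℝ) (hE : ContDiff ℝ 4 E)
    (Ω : Set (Vec N)) (hΩc : IsCompact Ω)
    (lam1 lam2 : Vec N → ℝ)
    (heig : ∀ x ∈ Ω, TwoSmallestEigen (hessOp E x) (lam1 x) (lam2 x) ∧
      lam1 x < 0 ∧ 0 < lam2 x)
    (g : ℝ) (hg : 0 < g)
    (hgmin : ∀ x ∈ Ω, g ≤ min (-(lam1 x)) (lam2 x))
    (L : ℝ) (hL : ∀ x ∈ Ω, ‖gradient E x‖ ≤ L) :
    ∃ C1 C2 : ℝ, 0 < C1 ∧ 0 < C2 ∧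
      ∀ ε : ℝ, 0 < ε → ∀ s : Set ℝ, IsOpen s → ∀ x v : ℝ → Vec N,
        IsGADSolOn E ε x v s → (∀ t ∈ s, x t ∈ Ω) →
        ∀ w : ℝ → Vec N, ContinuousOn w s →
          (∀ t ∈ s, IsMinEigvec (hessOp E (x t)) (w t) ∧ 0 ≤ ⟪v t, w t⟫) →
          ∀ t ∈ s, ∃ d : ℝ,
            HasDerivAt (fun τ => (1/2 : ℝ) * ‖v τ - w τ‖ ^ 2) d t ∧
            d ≤ (ε ^ 2)⁻¹ * ((-g + C1 * ‖v t - w t‖) * ‖v t - w t‖ ^ 2)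
                + C2 * ‖v t - w t‖ := by
  obtain ⟨M, hM⟩ := hΩc.exists_bound_of_continuousOn
    ((contDiff_hessCLM (n := 2) hE).continuous_fderiv two_ne_zero).continuousOn
  refine ⟨2 * g, max M 1 * (|L| + 1) / (2 * g), by positivity, by positivity, ?_⟩
  intro ε _ s hs x v hgad hxΩ w hwc hw t ht
  obtain ⟨hv, hx', hv'⟩ := hgad t ht
  obtain ⟨h2, hneg, hpos⟩ := heig (x t) (hxΩ t ht)
  obtain ⟨hg1, hg2⟩ := le_min_iff.1 (hgmin (x t) (hxΩ t ht))
  have heigw : ∀ᶠ τ in 𝓝 t, ‖w τ‖ = 1 ∧ hessCLM E (x τ) (w τ) = lam1 (x τ) • w τ := by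
    filter_upwards [hs.mem_nhds ht] with τ hτ
    exact ⟨(hw τ hτ).1.1, (hw τ hτ).1.apply_eq_smul (heig (x τ) (hxΩ τ hτ)).1⟩
  obtain ⟨hw₁, hTw⟩ := heigw.self_of_nhds
  obtain ⟨w', hw', hw'bound⟩ := exists_hasDerivAt_eigvec (hE.of_le (by norm_num)) hx'
    (hwc.continuousAt (hs.mem_nhds ht)) heigw h2 (hneg.trans hpos)
  have hsymm := isSymmetric_hessOp (x := x t) (hE.contDiffAt.of_le (by norm_num))
  have hw'K : ‖w'‖ ≤ max M 1 * (|L| + 1) / (2 * g) := by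
    have hD := norm_fderiv_hessCLM_apply_reflect_le ((hM _ (hxΩ t ht)).trans (le_max_left M 1))
      ((hL _ (hxΩ t ht)).trans (show L ≤ |L| + 1 by linarith [le_abs_self L])) hv hw₁
    rw [le_div_iff₀ (by positivity)]
    nlinarith [mul_le_mul_of_nonneg_right (by linarith : 2 * g ≤ lam2 (x t) - lam1 (x t))
      (norm_nonneg w')]
  exact ⟨_, hasDerivAt_half_norm_sq_sub hv' hw', inner_sub_gad_deriv_le hsymm
    (h2.mul_norm_sq_le_inner hsymm (hneg.trans hpos) (ne_of_apply_ne norm (by simp [hw₁])) hTw)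
    hw₁ hTw hv (hw t ht).2 hg.le (by linarith) hg2 hw'K⟩

/-- For `E ∈ C⁴`, along a GAD trajectory in a compact index-1 region `Ω`
with spectral-gap constant `g` and gradient bound `L`, there are constants `C1, C2 > 0`
(depending only on `E, Ω, L, g`) such that
`d/dt ½‖v - v1(x)‖² ≤ ε⁻²(-g + C1‖v - v1(x)‖)‖v - v1(x)‖² + C2‖v - v1(x)‖`,
where `v1(x)` is the sign choice of the first eigenvector closest to `v`. -/
theorem stmt5 {N : ℕ} (E : Vec N → ℝ) (hE : ContDiff ℝ 4 E)
    (Ω : Set (Vec N)) (hΩc : IsCompact Ω) (hΩne : Ω.Nonempty)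
    (lam1 lam2 : Vec N → ℝ)
    (heig : ∀ x ∈ Ω, TwoSmallestEigen (hessOp E x) (lam1 x) (lam2 x) ∧
      lam1 x < 0 ∧ 0 < lam2 x)
    (g : ℝ) (hg : 0 < g)
    (hgmin : ∀ x ∈ Ω, g ≤ min (-(lam1 x)) (lam2 x))
    (L : ℝ) (hL : ∀ x ∈ Ω, ‖gradient E x‖ ≤ L) :
    ∃ C1 C2 : ℝ, 0 < C1 ∧ 0 < C2 ∧
      ∀ ε : ℝ, 0 < ε → ∀ s : Set ℝ, IsOpen s → ∀ x v : ℝ → Vec N,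
        IsGADSolOn E ε x v s → (∀ t ∈ s, x t ∈ Ω) →
        ∀ w : ℝ → Vec N, ContinuousOn w s →
          (∀ t ∈ s, IsMinEigvec (hessOp E (x t)) (w t) ∧ 0 ≤ ⟪v t, w t⟫) →
          ∀ t ∈ s, ∃ d : ℝ,
            HasDerivAt (fun τ => (1/2 : ℝ) * ‖v τ - w τ‖ ^ 2) d t ∧
            d ≤ (ε ^ 2)⁻¹ * ((-g + C1 * ‖v t - w t‖) * ‖v t - w t‖ ^ 2)
                + C2 * ‖v t - w t‖ :=
  stmt5_general E hE Ω hΩc lam1 lam2 heig g hg hgmin L hL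
end

section
/- Let E ∈ C³(ℝ²) with 0 ∈ S, i.e. λ1(0) = λ2(0). Define F : ℝ² → ℝ² by F(x) = (⟨e1, ∇²E(x) e1⟩ − ⟨e2, ∇²E(x) e2⟩, ⟨e1, ∇²E(x) e2⟩), so that x ∈ S iff F(x) = 0. With E_ijk = ∇³E(0)[e_i, e_j, e_k], the Jacobian ∇F(0) = [[E111 − E122, E112 − E222], [E112, E122]] has determinant Δ := E111 E122 + E112 E222 − E112² − E122². If Δ ≠ 0, then 0 is an isolated point of S. -/
open Real Filter Set
open scoped Topology RealInnerProductSpace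

def SingularAt (E : Vec 2 → ℝ) (p : Vec 2) : Prop :=
  ∃ lam : ℝ, (hessOp E p).HasEigenvalue lam ∧
    ∀ μ : ℝ, (hessOp E p).HasEigenvalue μ → μ = lam

noncomputable section

/-- canonical basis vectors of `ℝ²`. -/
def e2 (i : Fin 2) : Vec 2 := EuclideanSpace.single i 1

/-- third partial derivatives `E_ijk = ∇³E(0)[e_i, e_j, e_k]`. -/
def D3 (E : Vec 2 → ℝ) (i j k : Fin 2) : ℝ :=
  iteratedFDeriv ℝ 3 E 0 ![e2 i, e2 j, e2 k]

/-- the map `F(x) = (⟨e1, ∇²E(x) e1⟩ - ⟨e2, ∇²E(x) e2⟩, ⟨e1, ∇²E(x) e2⟩)`. -/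
def Fmap (E : Vec 2 → ℝ) (x : Vec 2) : Vec 2 :=
  (WithLp.equiv 2 (Fin 2 → ℝ)).symm
    ![⟪e2 0, hessCLM E x (e2 0)⟫ - ⟪e2 1, hessCLM E x (e2 1)⟫,
      ⟪e2 0, hessCLM E x (e2 1)⟫]

/-- the Jacobian matrix `[[E111 - E122, E112 - E222], [E112, E122]]`. -/
def Jmat (E : Vec 2 → ℝ) : Matrix (Fin 2) (Fin 2) ℝ :=
  !![D3 E 0 0 0 - D3 E 0 1 1, D3 E 0 0 1 - D3 E 1 1 1;
     D3 E 0 0 1, D3 E 0 1 1]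

end

/-!
The Hessian is symmetric, so it has a single eigenvalue exactly when it is a multiple of the
identity, i.e. when its two diagonal entries agree and its off-diagonal entry vanishes: this is
`F(x) = 0`. The entries of `F` are second derivatives, so differentiating them once more gives
third derivatives, and the symmetry of `∇³E(0)` turns `∇F(0)` into the stated matrix. If its
determinant `Δ` is nonzero, `∇F(0)` is injective, hence anti-Lipschitz, and `F` does not vanish
on a punctured neighbourhood of `0`.
-/

section ThirdDerivative

variable {V W : Type*} [NormedAddCommGroup V] [NormedSpace ℝ V]
  [NormedAddCommGroup W] [NormedSpace ℝ W] {f : V → W} {x : V}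

theorem iteratedFDeriv_three_apply (f : V → W) (x a b c : V) :
    iteratedFDeriv ℝ 3 f x ![a, b, c] = fderiv ℝ (fderiv ℝ (fderiv ℝ f)) x a b c := by
  rw [iteratedFDeriv_succ_apply_right, iteratedFDeriv_two_apply]
  rfl

theorem hasFDerivAt_fderiv_fderiv_apply (hf : ContDiffAt ℝ 3 f x) (b c : V) :
    HasFDerivAt (fun y => fderiv ℝ (fderiv ℝ f) y b c)
      (((fderiv ℝ (fderiv ℝ (fderiv ℝ f)) x).flip b).flip c) x := by
  have hD2 : DifferentiableAt ℝ (fderiv ℝ (fderiv ℝ f)) x :=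
    ((hf.fderiv_right (m := 2) (by norm_num)).fderiv_right (m := 1) le_rfl).differentiableAt
      one_ne_zero
  refine ((hD2.hasFDerivAt.clm_apply (hasFDerivAt_const b x)).clm_apply
    (hasFDerivAt_const c x)).congr_fderiv ?_
  ext a
  simp

theorem fderiv_fderiv_fderiv_swap_left (hf : ContDiffAt ℝ 3 f x) (a b c : V) :
    fderiv ℝ (fderiv ℝ (fderiv ℝ f)) x a b c = fderiv ℝ (fderiv ℝ (fderiv ℝ f)) x b a c := by
  rw [(hf.fderiv_right (m := 2) (by norm_num)).isSymmSndFDerivAt (by simp) a b]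

theorem fderiv_fderiv_fderiv_swap_right (hf : ContDiffAt ℝ 3 f x) (a b c : V) :
    fderiv ℝ (fderiv ℝ (fderiv ℝ f)) x a b c = fderiv ℝ (fderiv ℝ (fderiv ℝ f)) x a c b := by
  have hsymm : (fun y => fderiv ℝ (fderiv ℝ f) y b c) =ᶠ[𝓝 x]
      fun y => fderiv ℝ (fderiv ℝ f) y c b := by
    filter_upwards [hf.eventually (by simp)] with y hy
    exact hy.isSymmSndFDerivAt (by norm_num) b c
  have h := (hasFDerivAt_fderiv_fderiv_apply hf b c).fderiv
  rw [hsymm.fderiv_eq, (hasFDerivAt_fderiv_fderiv_apply hf c b).fderiv] at h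
  exact congr($h.symm a)

end ThirdDerivative

theorem Matrix.injective_toEuclideanLin {𝕜 n : Type*} [RCLike 𝕜] [Fintype n] [DecidableEq n]
    {M : Matrix n n 𝕜} (hM : M.det ≠ 0) : Function.Injective (Matrix.toEuclideanLin M) :=
  fun _ _ h => WithLp.ofLp_injective 2
    (Matrix.mulVec_injective_of_det_ne_zero hM (congrArg WithLp.ofLp h))

theorem LinearMap.IsSymmetric.exists_unique_eigenvalue_iff {V : Type*} [NormedAddCommGroup V]
    [InnerProductSpace ℝ V] [FiniteDimensional ℝ V] [Nontrivial V] {T : Module.End ℝ V}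
    (hT : T.IsSymmetric) :
    (∃ lam : ℝ, T.HasEigenvalue lam ∧ ∀ μ : ℝ, T.HasEigenvalue μ → μ = lam) ↔
      ∃ a : ℝ, T = a • 1 := by
  constructor
  · rintro ⟨lam, -, hlam⟩
    refine ⟨lam, (hT.eigenvectorBasis rfl).toBasis.ext fun i => ?_⟩
    rw [OrthonormalBasis.coe_toBasis, hT.apply_eigenvectorBasis,
      hlam _ (hT.hasEigenvalue_eigenvalues rfl i)]
    simp
  · rintro ⟨a, rfl⟩
    obtain ⟨v, hv⟩ := exists_ne (0 : V)
    refine ⟨a, Module.End.hasEigenvalue_of_hasEigenvector (x := v) ⟨?_, hv⟩, fun μ hμ => ?_⟩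
    · simp
    · obtain ⟨w, hw, hw0⟩ := hμ.exists_hasEigenvector
      have h : a • w = μ • w := by simpa using Module.End.mem_eigenspace_iff.mp hw
      exact (smul_left_injective ℝ hw0 h).symm

theorem inner_hessCLM {N : ℕ} (E : Vec N → ℝ) (x u v : Vec N) :
    ⟪u, hessCLM E x v⟫ = fderiv ℝ (fderiv ℝ E) x v u := by
  let D : StrongDual ℝ (Vec N) ≃L[ℝ] Vec N :=
    (InnerProductSpace.toDual ℝ (Vec N)).symm.toContinuousLinearEquiv
  have h : gradient E = D ∘ fderiv ℝ E := rfl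
  rw [hessCLM, h, ContinuousLinearEquiv.comp_fderiv, real_inner_comm]
  exact InnerProductSpace.toDual_symm_apply

theorem hessOp_isSymmetric {N : ℕ} {E : Vec N → ℝ} {x : Vec N} (hE : ContDiffAt ℝ 2 E x) :
    (hessOp E x).IsSymmetric := fun u v => by
  rw [real_inner_comm]
  simp only [hessOp, ContinuousLinearMap.coe_coe, inner_hessCLM]
  exact hE.isSymmSndFDerivAt (by simp) u v

theorem singularAt_iff_hessOp_eq_smul_one {E : Vec 2 → ℝ} {x : Vec 2} (hE : ContDiffAt ℝ 2 E x) :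
    SingularAt E x ↔ ∃ a : ℝ, hessOp E x = a • 1 :=
  (hessOp_isSymmetric hE).exists_unique_eigenvalue_iff

theorem inner_e2 (i : Fin 2) (v : Vec 2) : ⟪e2 i, v⟫ = v i := by
  simp [e2, EuclideanSpace.inner_single_left]

theorem basisFun_toBasis_eq_e2 (k : Fin 2) :
    (EuclideanSpace.basisFun (Fin 2) ℝ).toBasis k = e2 k := by
  simp [e2]

theorem toEuclideanLin_e2_apply (M : Matrix (Fin 2) (Fin 2) ℝ) (r k : Fin 2) :
    Matrix.toEuclideanLin M (e2 k) r = M r k := by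
  simp [e2]

theorem exists_eq_smul_one_iff_inner_e2 {T : Module.End ℝ (Vec 2)} (hT : T.IsSymmetric) :
    (∃ a : ℝ, T = a • 1) ↔
      ⟪e2 0, T (e2 0)⟫ - ⟪e2 1, T (e2 1)⟫ = 0 ∧ ⟪e2 0, T (e2 1)⟫ = 0 := by
  constructor
  · rintro ⟨a, rfl⟩
    simp [e2, EuclideanSpace.inner_single_left]
  · rintro ⟨hdiag, hoff⟩
    have hoff' : ⟪e2 1, T (e2 0)⟫ = 0 := by rw [real_inner_comm, hT, hoff]
    refine ⟨⟪e2 0, T (e2 0)⟫, (EuclideanSpace.basisFun (Fin 2) ℝ).toBasis.ext fun i => ?_⟩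
    ext j
    rw [← inner_e2]
    fin_cases i <;> fin_cases j <;> simp [e2] at * <;> linarith

theorem Fmap_eq_zero_iff (E : Vec 2 → ℝ) (x : Vec 2) :
    Fmap E x = 0 ↔ ⟪e2 0, hessCLM E x (e2 0)⟫ - ⟪e2 1, hessCLM E x (e2 1)⟫ = 0 ∧
      ⟪e2 0, hessCLM E x (e2 1)⟫ = 0 := by
  simp [Fmap]

theorem singularAt_iff_Fmap_eq_zero {E : Vec 2 → ℝ} {x : Vec 2} (hE : ContDiffAt ℝ 2 E x) :
    SingularAt E x ↔ Fmap E x = 0 := by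
  rw [singularAt_iff_hessOp_eq_smul_one hE, exists_eq_smul_one_iff_inner_e2 (hessOp_isSymmetric hE),
    Fmap_eq_zero_iff]
  rfl

theorem D3_eq_fderiv (E : Vec 2 → ℝ) (i j k : Fin 2) :
    D3 E i j k = fderiv ℝ (fderiv ℝ (fderiv ℝ E)) 0 (e2 i) (e2 j) (e2 k) :=
  iteratedFDeriv_three_apply E 0 _ _ _

theorem Fmap_apply_zero (E : Vec 2 → ℝ) (x : Vec 2) :
    Fmap E x 0 =
      fderiv ℝ (fderiv ℝ E) x (e2 0) (e2 0) - fderiv ℝ (fderiv ℝ E) x (e2 1) (e2 1) := by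
  simp [Fmap, inner_hessCLM]

theorem Fmap_apply_one (E : Vec 2 → ℝ) (x : Vec 2) :
    Fmap E x 1 = fderiv ℝ (fderiv ℝ E) x (e2 1) (e2 0) := by
  simp [Fmap, inner_hessCLM]

theorem hasFDerivAt_Fmap {E : Vec 2 → ℝ} (hE : ContDiffAt ℝ 3 E 0) :
    HasFDerivAt (Fmap E) (LinearMap.toContinuousLinearMap (Matrix.toEuclideanLin (Jmat E))) 0 := by
  have hentry := hasFDerivAt_fderiv_fderiv_apply hE
  rw [← hasFDerivWithinAt_univ, hasFDerivWithinAt_euclidean]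
  intro r
  rw [hasFDerivWithinAt_univ]
  -- compare both sides on `e2 k`; `Jmat` lists the third derivatives in sorted index order
  fin_cases r
  · simp only [Fin.zero_eta, Fin.isValue, Fmap_apply_zero]
    refine ((hentry (e2 0) (e2 0)).sub (hentry (e2 1) (e2 1))).congr_fderiv
      (ContinuousLinearMap.coe_injective
        ((EuclideanSpace.basisFun (Fin 2) ℝ).toBasis.ext fun k => ?_))
    fin_cases k <;> simp [Jmat, D3_eq_fderiv, basisFun_toBasis_eq_e2, toEuclideanLin_e2_apply]
    linarith [fderiv_fderiv_fderiv_swap_left hE (e2 1) (e2 0) (e2 0),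
      fderiv_fderiv_fderiv_swap_right hE (e2 0) (e2 1) (e2 0)]
  · simp only [Fin.mk_one, Fin.isValue, Fmap_apply_one]
    refine (hentry (e2 1) (e2 0)).congr_fderiv
      (ContinuousLinearMap.coe_injective
        ((EuclideanSpace.basisFun (Fin 2) ℝ).toBasis.ext fun k => ?_))
    fin_cases k <;> simp [Jmat, D3_eq_fderiv, basisFun_toBasis_eq_e2, toEuclideanLin_e2_apply]
    · linarith [fderiv_fderiv_fderiv_swap_right hE (e2 0) (e2 1) (e2 0)]
    · linarith [fderiv_fderiv_fderiv_swap_left hE (e2 1) (e2 0) (e2 1),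
        fderiv_fderiv_fderiv_swap_right hE (e2 1) (e2 1) (e2 0)]

theorem stmt10_general (E : Vec 2 → ℝ) (hE : ContDiff ℝ 3 E)
    (Δ : ℝ)
    (hΔ : Δ = D3 E 0 0 0 * D3 E 0 1 1 + D3 E 0 0 1 * D3 E 1 1 1
            - (D3 E 0 0 1) ^ 2 - (D3 E 0 1 1) ^ 2) :
    (∀ x : Vec 2, SingularAt E x ↔ Fmap E x = 0) ∧
    HasFDerivAt (Fmap E)
      (LinearMap.toContinuousLinearMap (Matrix.toEuclideanLin (Jmat E))) 0 ∧
    (Jmat E).det = Δ ∧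
    (Δ ≠ 0 → ∃ U ∈ 𝓝 (0 : Vec 2), ∀ x ∈ U, SingularAt E x → x = 0) := by
  have hS : ∀ x, SingularAt E x ↔ Fmap E x = 0 := fun x =>
    singularAt_iff_Fmap_eq_zero (hE.contDiffAt.of_le (by norm_num))
  have hJ := hasFDerivAt_Fmap hE.contDiffAt
  have hdet : (Jmat E).det = Δ := by
    rw [hΔ, Jmat, Matrix.det_fin_two_of]
    ring
  refine ⟨hS, hJ, hdet, fun hΔ0 => ?_⟩
  obtain ⟨K, -, hK⟩ := (Matrix.toEuclideanLin (Jmat E)).injective_iff_antilipschitz.mp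
    (Matrix.injective_toEuclideanLin (hdet ▸ hΔ0))
  have hF : ∀ᶠ z in 𝓝[≠] (0 : Vec 2), Fmap E z ≠ 0 := hJ.eventually_ne ⟨K, hK⟩
  refine ⟨_, eventually_nhdsWithin_iff.mp hF, fun x hx hsing => ?_⟩
  by_contra hx0
  exact hx hx0 ((hS x).mp hsing)

/-- For `E ∈ C³(ℝ²)` with a singularity at `0`: `x ∈ S` iff `F(x) = 0`;
the Jacobian of `F` at `0` is the matrix `[[E111 - E122, E112 - E222], [E112, E122]]`,
whose determinant is `Δ = E111 E122 + E112 E222 - E112² - E122²`; and if `Δ ≠ 0` then `0`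
is an isolated point of the singular set `S`. -/
theorem stmt10 (E : Vec 2 → ℝ) (hE : ContDiff ℝ 3 E) (h0 : SingularAt E 0)
    (Δ : ℝ)
    (hΔ : Δ = D3 E 0 0 0 * D3 E 0 1 1 + D3 E 0 0 1 * D3 E 1 1 1
            - (D3 E 0 0 1) ^ 2 - (D3 E 0 1 1) ^ 2) :
    (∀ x : Vec 2, SingularAt E x ↔ Fmap E x = 0) ∧
    HasFDerivAt (Fmap E)
      (LinearMap.toContinuousLinearMap (Matrix.toEuclideanLin (Jmat E))) 0 ∧
    (Jmat E).det = Δ ∧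
    (Δ ≠ 0 → ∃ U ∈ 𝓝 (0 : Vec 2), ∀ x ∈ U, SingularAt E x → x = 0) :=
  stmt10_general E hE Δ hΔ
end

section
/- Let α ∈ ℝ with cos α > 0 and sin α ≠ 0, and consider the planar system ṙ = cos(ω − α), ω̇ = 2 r sin ω − (1/r) sin(ω − α) on r > 0. Set r0 = 1/√(2 cos α) and ω0^± = α ± π/2. If sin α > 0 then the fixed point (r0, ω0^+) is asymptotically (exponentially) stable: both eigenvalues of the Jacobian J^+ = [[0, −1], [4 cos α, −2 sin α/√(2 cos α)]] have strictly negative real part. If sin α < 0 then (r0, ω0^−) is asymptotically (exponentially) stable in the same sense. Consequently the reduced leading-order isotropic GAD admits a stable circular orbit of radius ε/√(2 cos α) in the original spatial variable. -/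
/-!
At the equilibrium the Jacobian `J` has trace `-2σ sin α / √(2 cos α) < 0` and determinant
`4 cos α > 0`, so the roots of its characteristic polynomial `μ² - (tr J) μ + det J` lie in the
open left half-plane.

Exponential stability is Lyapunov's indirect method. For a real `2 × 2` matrix `A` with
`tr A < 0 < det A` put `V z = det A ‖z‖² + ‖A z‖²`. By Cayley–Hamilton, `A² = (tr A) A - det A`,
the derivative of `V` along `ż = A z` is `2 (tr A) ‖A z‖²`, and `‖A z‖ ≥ det A ‖z‖ / ‖A‖_F` because
`adj A * A = det A`; so `V̇ ≤ -γ ‖z‖²`. The nonlinear remainder of the field is `o(‖z‖)`, hence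
`V̇ ≤ -c V` still holds on a small sublevel set of `V`, which is therefore invariant, and `V`
decays exponentially along every trajectory starting in it.
-/

open Real Set

theorem Complex.re_neg_of_sq_sub_mul_add_eq_zero {τ d : ℝ} (hτ : τ < 0) (hd : 0 < d) {μ : ℂ}
    (hμ : μ ^ 2 - τ * μ + d = 0) : μ.re < 0 := by
  have hre := congrArg Complex.re hμ
  have him := congrArg Complex.im hμ
  simp only [sq, Complex.add_re, Complex.sub_re, Complex.mul_re, Complex.ofReal_re,
    Complex.ofReal_im, Complex.add_im, Complex.sub_im, Complex.mul_im, Complex.zero_re,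
    Complex.zero_im] at hre him
  by_cases h : μ.im = 0
  · rw [h] at hre
    nlinarith
  · have : 2 * μ.re = τ := by
      apply mul_left_cancel₀ h
      linarith
    linarith

theorem Matrix.re_neg_of_hasEigenvalue_fin_two {p q r s : ℝ} (htr : p + s < 0)
    (hdet : 0 < p * s - q * r) {μ : ℂ}
    (hμ : Module.End.HasEigenvalue (Matrix.toLin' (!![p, q; r, s].map Complex.ofReal)) μ) :
    μ.re < 0 := by
  rw [Module.End.hasEigenvalue_iff_isRoot_charpoly, Matrix.charpoly_toLin',
    Matrix.charpoly_fin_two] at hμ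
  refine Complex.re_neg_of_sq_sub_mul_add_eq_zero htr hdet ?_
  simpa [Matrix.trace_fin_two, Matrix.det_fin_two] using hμ

theorem le_mul_exp_of_hasDerivAt_le_neg_mul {V V' : ℝ → ℝ} {c M : ℝ} (hc : 0 < c) (hM : 0 < M)
    (hV : ∀ t ∈ Ici (0:ℝ), HasDerivAt V (V' t) t) (h₀ : V 0 ≤ M)
    (hV' : ∀ t ∈ Ici (0:ℝ), V t ≤ M → V' t ≤ -c * V t) :
    ∀ t ∈ Ici (0:ℝ), V t ≤ M * exp (-(c / 2) * t) := by
  intro t ht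
  -- Compare with the barrier `B = M e^{-ct/2}`: where `V = B ≤ M`, `V' ≤ -c B < B'`.
  have hB (x : ℝ) :
      HasDerivAt (fun x => M * exp (-(c / 2) * x)) (M * exp (-(c / 2) * x) * -(c / 2)) x := by
    simpa [mul_assoc] using (((hasDerivAt_id x).const_mul (-(c / 2))).exp).const_mul M
  refine image_le_of_deriv_right_lt_deriv_boundary
    (fun x hx => (hV x hx.1).continuousAt.continuousWithinAt)
    (fun x hx => (hV x hx.1).hasDerivWithinAt) (by simpa using h₀) hB ?_ ⟨ht, le_rfl⟩
  intro x hx hVx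
  have hpos : 0 < M * exp (-(c / 2) * x) := by positivity
  have hle : V x ≤ M := by
    rw [hVx]; exact mul_le_of_le_one_right hM.le (exp_le_one_iff.2 (by nlinarith [hx.1]))
  nlinarith [hV' x hx.1 hle]

section HurwitzLyapunov

variable (p q r s : ℝ)

/-- `det A ‖z‖² + ‖A z‖²` for `A = !![p, q; r, s]` and `z = (u, v)`. -/
def hurwitzLyapunov (u v : ℝ) : ℝ :=
  (p * s - q * r) * (u ^ 2 + v ^ 2) + ((p * u + q * v) ^ 2 + (r * u + s * v) ^ 2)

def hurwitzLyapunovDeriv (u v w₁ w₂ : ℝ) : ℝ :=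
  2 * (p * s - q * r) * (u * w₁ + v * w₂)
    + 2 * ((p * u + q * v) * (p * w₁ + q * w₂) + (r * u + s * v) * (r * w₁ + s * w₂))

variable {p q r s}

theorem hasDerivAt_hurwitzLyapunov {u v : ℝ → ℝ} {u' v' t : ℝ} (hu : HasDerivAt u u' t)
    (hv : HasDerivAt v v' t) :
    HasDerivAt (fun t => hurwitzLyapunov p q r s (u t) (v t))
      (hurwitzLyapunovDeriv p q r s (u t) (v t) u' v') t := by
  have := (((hu.pow 2).add (hv.pow 2)).const_mul (p * s - q * r)).add
    ((((hu.const_mul p).add (hv.const_mul q)).pow 2).add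
      (((hu.const_mul r).add (hv.const_mul s)).pow 2))
  unfold hurwitzLyapunov hurwitzLyapunovDeriv
  exact this.congr_deriv (by simp only [Pi.add_apply, Nat.cast_ofNat]; ring)

theorem mul_sq_le_hurwitzLyapunov (u v : ℝ) :
    (p * s - q * r) * (u ^ 2 + v ^ 2) ≤ hurwitzLyapunov p q r s u v := by
  unfold hurwitzLyapunov
  nlinarith [sq_nonneg (p * u + q * v), sq_nonneg (r * u + s * v)]

theorem hurwitzLyapunov_le (u v : ℝ) :
    hurwitzLyapunov p q r s u v
      ≤ (p * s - q * r + (p ^ 2 + q ^ 2 + r ^ 2 + s ^ 2)) * (u ^ 2 + v ^ 2) := by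
  unfold hurwitzLyapunov
  nlinarith [sq_nonneg (p * v - q * u), sq_nonneg (r * v - s * u)]

theorem hurwitzLyapunovDeriv_linear_le (htr : p + s ≤ 0) (u v : ℝ) :
    (p ^ 2 + q ^ 2 + r ^ 2 + s ^ 2)
        * hurwitzLyapunovDeriv p q r s u v (p * u + q * v) (r * u + s * v)
      ≤ 2 * (p + s) * (p * s - q * r) ^ 2 * (u ^ 2 + v ^ 2) := by
  have hCH : hurwitzLyapunovDeriv p q r s u v (p * u + q * v) (r * u + s * v)
      = 2 * (p + s) * ((p * u + q * v) ^ 2 + (r * u + s * v) ^ 2) := by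
    unfold hurwitzLyapunovDeriv; ring
  have hadj : (p ^ 2 + q ^ 2 + r ^ 2 + s ^ 2) * ((p * u + q * v) ^ 2 + (r * u + s * v) ^ 2)
      = (p * s - q * r) ^ 2 * (u ^ 2 + v ^ 2)
        + ((q * (p * u + q * v) + s * (r * u + s * v)) ^ 2
          + (p * (p * u + q * v) + r * (r * u + s * v)) ^ 2) := by ring
  rw [hCH]
  nlinarith [hadj, sq_nonneg (q * (p * u + q * v) + s * (r * u + s * v)),
    sq_nonneg (p * (p * u + q * v) + r * (r * u + s * v))]

theorem abs_hurwitzLyapunovDeriv_le (hdet : 0 ≤ p * s - q * r) {u v e₁ e₂ ε : ℝ} (hε : 0 ≤ ε)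
    (he : e₁ ^ 2 + e₂ ^ 2 ≤ ε ^ 2 * (u ^ 2 + v ^ 2)) :
    |hurwitzLyapunovDeriv p q r s u v e₁ e₂|
      ≤ 2 * (p * s - q * r + (p ^ 2 + q ^ 2 + r ^ 2 + s ^ 2)) * ε * (u ^ 2 + v ^ 2) := by
  set N := u ^ 2 + v ^ 2
  set M := p ^ 2 + q ^ 2 + r ^ 2 + s ^ 2
  have hcs (a b c d : ℝ) : (a * c + b * d) ^ 2 ≤ (a ^ 2 + b ^ 2) * (c ^ 2 + d ^ 2) := by
    nlinarith [sq_nonneg (a * d - b * c)]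
  have h₁ : |u * e₁ + v * e₂| ≤ ε * N := by
    refine abs_le_of_sq_le_sq ?_ (by positivity)
    calc (u * e₁ + v * e₂) ^ 2 ≤ N * (e₁ ^ 2 + e₂ ^ 2) := hcs ..
      _ ≤ N * (ε ^ 2 * N) := by gcongr
      _ = (ε * N) ^ 2 := by ring
  have hA (x y : ℝ) : (p * x + q * y) ^ 2 + (r * x + s * y) ^ 2 ≤ M * (x ^ 2 + y ^ 2) := by
    nlinarith [hcs p q x y, hcs r s x y]
  have h₂ : |(p * u + q * v) * (p * e₁ + q * e₂) + (r * u + s * v) * (r * e₁ + s * e₂)|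
      ≤ M * ε * N := by
    refine abs_le_of_sq_le_sq ?_ (by positivity)
    calc _ ≤ ((p * u + q * v) ^ 2 + (r * u + s * v) ^ 2)
          * ((p * e₁ + q * e₂) ^ 2 + (r * e₁ + s * e₂) ^ 2) := hcs ..
      _ ≤ (M * N) * (M * (ε ^ 2 * N)) := by
          gcongr
          · exact hA u v
          · exact (hA e₁ e₂).trans (by gcongr)
      _ = (M * ε * N) ^ 2 := by ring
  unfold hurwitzLyapunovDeriv
  calc _ ≤ 2 * (p * s - q * r) * |u * e₁ + v * e₂|
        + 2 * |(p * u + q * v) * (p * e₁ + q * e₂) + (r * u + s * v) * (r * e₁ + s * e₂)| := by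
        refine (abs_add_le _ _).trans ?_
        rw [abs_mul, abs_mul, abs_mul, abs_of_nonneg hdet, abs_two]
    _ ≤ _ := by nlinarith

end HurwitzLyapunov

section LinearizedStability

open ContinuousLinearMap

theorem HasFDerivAt.exists_abs_sub_le_mul_max {F : ℝ × ℝ → ℝ} {p q x₀ y₀ : ℝ}
    (hF : HasFDerivAt F (p • fst ℝ ℝ ℝ + q • snd ℝ ℝ ℝ) (x₀, y₀)) {ε : ℝ} (hε : 0 < ε) :
    ∃ ρ > 0, ∀ x y, |x - x₀| ≤ ρ → |y - y₀| ≤ ρ →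
      |F (x, y) - F (x₀, y₀) - (p * (x - x₀) + q * (y - y₀))| ≤ ε * max |x - x₀| |y - y₀| := by
  obtain ⟨ρ, hρ, hball⟩ := Metric.eventually_nhds_iff.1 (hF.isLittleO.def hε)
  refine ⟨ρ / 2, half_pos hρ, fun x y hx hy => ?_⟩
  have hdist : dist (x, y) (x₀, y₀) < ρ := by
    rw [Prod.dist_eq, Real.dist_eq, Real.dist_eq]
    exact max_lt (by linarith) (by linarith)
  simpa [Prod.norm_def] using hball hdist

theorem exists_hurwitzLyapunovDeriv_le {p q r s : ℝ} (htr : p + s < 0)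
    (hdet : 0 < p * s - q * r) {F G : ℝ × ℝ → ℝ} {x₀ y₀ : ℝ} (hF₀ : F (x₀, y₀) = 0)
    (hG₀ : G (x₀, y₀) = 0) (hF : HasFDerivAt F (p • fst ℝ ℝ ℝ + q • snd ℝ ℝ ℝ) (x₀, y₀))
    (hG : HasFDerivAt G (r • fst ℝ ℝ ℝ + s • snd ℝ ℝ ℝ) (x₀, y₀)) :
    ∃ γ > 0, ∃ ρ > 0, ∀ x y, |x - x₀| ≤ ρ → |y - y₀| ≤ ρ →
      hurwitzLyapunovDeriv p q r s (x - x₀) (y - y₀) (F (x, y)) (G (x, y))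
        ≤ -γ * ((x - x₀) ^ 2 + (y - y₀) ^ 2) := by
  set D := p * s - q * r
  set M := p ^ 2 + q ^ 2 + r ^ 2 + s ^ 2
  have hM : 0 < M := by nlinarith [sq_nonneg (p - s), sq_nonneg (q + r)]
  set γ := -(p + s) * D ^ 2 / M
  have hγ : 0 < γ := div_pos (mul_pos (neg_pos.2 htr) (pow_pos hdet 2)) hM
  set ε := γ / (2 * (D + M))
  have hε : 0 < ε := by positivity
  obtain ⟨ρF, hρF, hFρ⟩ := hF.exists_abs_sub_le_mul_max (half_pos hε)
  obtain ⟨ρG, hρG, hGρ⟩ := hG.exists_abs_sub_le_mul_max (half_pos hε)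
  refine ⟨γ, hγ, min ρF ρG, lt_min hρF hρG, fun x y hx hy => ?_⟩
  set u := x - x₀
  set v := y - y₀
  have hmax : max |u| |v| ^ 2 ≤ u ^ 2 + v ^ 2 := by
    rcases max_cases |u| |v| with ⟨h, -⟩ | ⟨h, -⟩ <;> rw [h, sq_abs] <;> nlinarith
  have he₁ := hFρ x y (hx.trans (min_le_left _ _)) (hy.trans (min_le_left _ _))
  have he₂ := hGρ x y (hx.trans (min_le_right _ _)) (hy.trans (min_le_right _ _))
  rw [hF₀, sub_zero] at he₁
  rw [hG₀, sub_zero] at he₂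
  have he : (F (x, y) - (p * u + q * v)) ^ 2 + (G (x, y) - (r * u + s * v)) ^ 2
      ≤ ε ^ 2 * (u ^ 2 + v ^ 2) := by
    have h₁ := sq_le_sq' (abs_le.1 he₁).1 (abs_le.1 he₁).2
    have h₂ := sq_le_sq' (abs_le.1 he₂).1 (abs_le.1 he₂).2
    nlinarith
  have hlin : hurwitzLyapunovDeriv p q r s u v (p * u + q * v) (r * u + s * v)
      ≤ -2 * γ * (u ^ 2 + v ^ 2) := by
    refine le_of_mul_le_mul_left ?_ hM
    calc _ ≤ 2 * (p + s) * D ^ 2 * (u ^ 2 + v ^ 2) :=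
          hurwitzLyapunovDeriv_linear_le htr.le u v
      _ = M * (-2 * γ * (u ^ 2 + v ^ 2)) := by
        simp only [γ]; field_simp
  have hrem : hurwitzLyapunovDeriv p q r s u v (F (x, y) - (p * u + q * v))
      (G (x, y) - (r * u + s * v)) ≤ γ * (u ^ 2 + v ^ 2) := by
    have hεγ : 2 * (D + M) * ε = γ := mul_div_cancel₀ _ (by positivity)
    rw [← hεγ]
    exact (le_abs_self _).trans (abs_hurwitzLyapunovDeriv_le hdet.le hε.le he)
  have hsplit : hurwitzLyapunovDeriv p q r s u v (F (x, y)) (G (x, y))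
      = hurwitzLyapunovDeriv p q r s u v (p * u + q * v) (r * u + s * v)
        + hurwitzLyapunovDeriv p q r s u v (F (x, y) - (p * u + q * v))
            (G (x, y) - (r * u + s * v)) := by
    unfold hurwitzLyapunovDeriv; ring
  rw [hsplit]
  linarith

theorem exists_exp_decay_of_hasFDerivAt {p q r s : ℝ} (htr : p + s < 0)
    (hdet : 0 < p * s - q * r) {F G : ℝ × ℝ → ℝ} {x₀ y₀ : ℝ} (hF₀ : F (x₀, y₀) = 0)
    (hG₀ : G (x₀, y₀) = 0) (hF : HasFDerivAt F (p • fst ℝ ℝ ℝ + q • snd ℝ ℝ ℝ) (x₀, y₀))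
    (hG : HasFDerivAt G (r • fst ℝ ℝ ℝ + s • snd ℝ ℝ ℝ) (x₀, y₀)) :
    ∃ δ K c : ℝ, 0 < δ ∧ 0 < K ∧ 0 < c ∧ ∀ x y : ℝ → ℝ,
      (∀ t ∈ Ici (0:ℝ), HasDerivAt x (F (x t, y t)) t ∧ HasDerivAt y (G (x t, y t)) t) →
      |x 0 - x₀| + |y 0 - y₀| < δ →
      ∀ t ∈ Ici (0:ℝ), |x t - x₀| + |y t - y₀| ≤ K * exp (-c * t) := by
  obtain ⟨γ, hγ, ρ, hρ, hderiv⟩ := exists_hurwitzLyapunovDeriv_le htr hdet hF₀ hG₀ hF hG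
  set D := p * s - q * r
  set Λ := D + (p ^ 2 + q ^ 2 + r ^ 2 + s ^ 2)
  have hΛ : 0 < Λ := by positivity
  have hDΛ : D ≤ Λ := le_add_of_nonneg_right (by positivity)
  refine ⟨ρ * D / Λ, 2 * ρ, γ / Λ / 4, by positivity, by positivity, by positivity,
    fun x y hxy h₀ t ht => ?_⟩
  set V := fun t => hurwitzLyapunov p q r s (x t - x₀) (y t - y₀)
  have hsq_le (t : ℝ) : (x t - x₀) ^ 2 + (y t - y₀) ^ 2 ≤ (|x t - x₀| + |y t - y₀|) ^ 2 := by
    nlinarith [sq_abs (x t - x₀), sq_abs (y t - y₀), abs_nonneg (x t - x₀), abs_nonneg (y t - y₀)]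
  have hN_le (t : ℝ) (hVt : V t ≤ D * ρ ^ 2) : (x t - x₀) ^ 2 + (y t - y₀) ^ 2 ≤ ρ ^ 2 :=
    le_of_mul_le_mul_left ((mul_sq_le_hurwitzLyapunov _ _).trans hVt) hdet
  have hdecay := le_mul_exp_of_hasDerivAt_le_neg_mul (V := V) (c := γ / Λ)
    (M := D * ρ ^ 2) (by positivity) (by positivity)
    (fun t ht =>
      hasDerivAt_hurwitzLyapunov ((hxy t ht).1.sub_const x₀) ((hxy t ht).2.sub_const y₀))
    ?h₀ ?hV' t ht
  case h₀ =>
    calc V 0 ≤ Λ * ((x 0 - x₀) ^ 2 + (y 0 - y₀) ^ 2) := hurwitzLyapunov_le _ _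
      _ ≤ Λ * (ρ * D / Λ) ^ 2 := by gcongr; exact (hsq_le 0).trans (by gcongr)
      _ = ρ ^ 2 * D * (D / Λ) := by field_simp
      _ ≤ ρ ^ 2 * D * 1 := by gcongr; exact div_le_one_of_le₀ hDΛ hΛ.le
      _ = D * ρ ^ 2 := by ring
  case hV' =>
    intro t ht hVt
    have hN := hN_le t hVt
    have hbox (w : ℝ) (hw : w ^ 2 ≤ (x t - x₀) ^ 2 + (y t - y₀) ^ 2) : |w| ≤ ρ :=
      abs_le_of_sq_le_sq (hw.trans hN) hρ.le
    calc _ ≤ -γ * ((x t - x₀) ^ 2 + (y t - y₀) ^ 2) :=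
          hderiv (x t) (y t) (hbox _ (by nlinarith)) (hbox _ (by nlinarith))
      _ ≤ -(γ / Λ) * V t := by
          have := hurwitzLyapunov_le (p := p) (q := q) (r := r) (s := s) (x t - x₀) (y t - y₀)
          rw [neg_mul, neg_mul, neg_le_neg_iff, div_mul_eq_mul_div, div_le_iff₀ hΛ]
          nlinarith
  have hE : exp (-(γ / Λ / 2) * t) = exp (-(γ / Λ / 4) * t) ^ 2 := by
    rw [← exp_nat_mul]; ring_nf
  refine le_of_pow_le_pow_left₀ two_ne_zero (by positivity) ?_
  calc (|x t - x₀| + |y t - y₀|) ^ 2 ≤ 2 * ((x t - x₀) ^ 2 + (y t - y₀) ^ 2) := by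
        simpa only [sq_abs] using add_sq_le (a := |x t - x₀|) (b := |y t - y₀|)
    _ ≤ 2 * (ρ ^ 2 * exp (-(γ / Λ / 2) * t)) := by
        gcongr
        refine le_of_mul_le_mul_left ?_ hdet
        calc _ ≤ V t := mul_sq_le_hurwitzLyapunov _ _
          _ ≤ _ := hdecay
          _ = _ := by ring
    _ ≤ (2 * ρ * exp (-(γ / Λ / 4) * t)) ^ 2 := by
        rw [hE]; nlinarith [sq_nonneg (ρ * exp (-(γ / Λ / 4) * t))]

end LinearizedStability

noncomputable def gadRadialField (α : ℝ) (z : ℝ × ℝ) : ℝ := cos (z.2 - α)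

noncomputable def gadAngularField (α : ℝ) (z : ℝ × ℝ) : ℝ :=
  2 * z.1 * sin z.2 - z.1⁻¹ * sin (z.2 - α)

theorem sin_sign_mul_pi_div_two {σ : ℝ} (hσ : σ = 1 ∨ σ = -1) : sin (σ * (π / 2)) = σ := by
  rcases hσ with rfl | rfl <;> simp

theorem cos_sign_mul_pi_div_two {σ : ℝ} (hσ : σ = 1 ∨ σ = -1) : cos (σ * (π / 2)) = 0 := by
  rcases hσ with rfl | rfl <;> simp

section ReducedGAD

open ContinuousLinearMap

variable {α σ : ℝ}

theorem gadRadialField_eq_zero (hσ : σ = 1 ∨ σ = -1) (r₀ : ℝ) :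
    gadRadialField α (r₀, α + σ * (π / 2)) = 0 := by
  simp [gadRadialField, cos_sign_mul_pi_div_two hσ]

theorem gadAngularField_eq_zero (hσ : σ = 1 ∨ σ = -1) (hcos : 0 < cos α) :
    gadAngularField α (1 / √(2 * cos α), α + σ * (π / 2)) = 0 := by
  have hR : √(2 * cos α) ^ 2 = 2 * cos α := sq_sqrt (by positivity)
  simp only [gadAngularField, add_sub_cancel_left, sin_add, sin_sign_mul_pi_div_two hσ,
    cos_sign_mul_pi_div_two hσ]
  field_simp
  linear_combination (-σ) * hR

theorem hasFDerivAt_gadRadialField (hσ : σ = 1 ∨ σ = -1) (r₀ : ℝ) :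
    HasFDerivAt (gadRadialField α) ((0 : ℝ) • fst ℝ ℝ ℝ + (-σ) • snd ℝ ℝ ℝ)
      (r₀, α + σ * (π / 2)) := by
  have := (hasFDerivAt_snd (p := (r₀, α + σ * (π / 2)))).sub_const α |>.cos
  refine this.congr_fderiv ?_
  ext <;> simp [sin_sign_mul_pi_div_two hσ]

theorem hasFDerivAt_gadAngularField (hσ : σ = 1 ∨ σ = -1) (hcos : 0 < cos α) :
    HasFDerivAt (gadAngularField α)
      ((σ * 4 * cos α) • fst ℝ ℝ ℝ + (-σ * (2 * sin α / √(2 * cos α))) • snd ℝ ℝ ℝ)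
      (1 / √(2 * cos α), α + σ * (π / 2)) := by
  have hR : √(2 * cos α) ^ 2 = 2 * cos α := sq_sqrt (by positivity)
  have hR0 : 0 < √(2 * cos α) := sqrt_pos.2 (by positivity)
  generalize √(2 * cos α) = R at *
  set z₀ : ℝ × ℝ := (1 / R, α + σ * (π / 2))
  have hr₀ : z₀.1 ≠ 0 := by simp [z₀, hR0.ne']
  have := (((hasFDerivAt_fst (p := z₀)).const_mul 2).mul (hasFDerivAt_snd.sin)).sub
    (((hasDerivAt_inv hr₀).comp_hasFDerivAt z₀ hasFDerivAt_fst).mul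
      ((hasFDerivAt_snd.sub_const α).sin))
  refine this.congr_fderiv ?_
  ext <;> simp [z₀, sin_add, cos_add, sin_sign_mul_pi_div_two hσ, cos_sign_mul_pi_div_two hσ]
  · linear_combination σ * hR
  · ring

end ReducedGAD

theorem stmt17_general (α : ℝ) (hcos : 0 < Real.cos α)
    (r0 : ℝ) (hr0 : r0 = 1 / Real.sqrt (2 * Real.cos α))
    (σ : ℝ) (hσ : (σ = 1 ∧ 0 < Real.sin α) ∨ (σ = -1 ∧ Real.sin α < 0))
    (ω0 : ℝ) (hω0 : ω0 = α + σ * (π / 2))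
    (J : Matrix (Fin 2) (Fin 2) ℝ)
    (hJ : J = !![0, -σ;
                 σ * 4 * Real.cos α, -σ * (2 * Real.sin α / Real.sqrt (2 * Real.cos α))]) :
    -- both eigenvalues of the Jacobian have strictly negative real part
    (∀ μ : ℂ, Module.End.HasEigenvalue
        (Matrix.toLin' (J.map (Complex.ofReal))) μ → μ.re < 0) ∧
    -- asymptotic (exponential) stability of the fixed point `(r0, ω0)`
    (∃ δ K c : ℝ, 0 < δ ∧ 0 < K ∧ 0 < c ∧
      ∀ r ω : ℝ → ℝ,
        (∀ t ∈ Ici (0:ℝ), 0 < r t ∧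
          HasDerivAt r (Real.cos (ω t - α)) t ∧
          HasDerivAt ω (2 * r t * Real.sin (ω t) - (r t)⁻¹ * Real.sin (ω t - α)) t) →
        |r 0 - r0| + |ω 0 - ω0| < δ →
        ∀ t ∈ Ici (0:ℝ), |r t - r0| + |ω t - ω0| ≤ K * Real.exp (-c * t)) ∧
    -- in the original (un-rescaled) spatial variable the stable orbit has radius
    -- `ε·r0 = ε/√(2 cos α)`
    (∀ ε : ℝ, 0 < ε → ε * r0 = ε / Real.sqrt (2 * Real.cos α)) := by
  have hσ₁ : σ = 1 ∨ σ = -1 := hσ.imp And.left And.left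
  have htr : 0 + -σ * (2 * sin α / √(2 * cos α)) < 0 := by
    have hσsin : 0 < σ * sin α := by rcases hσ with ⟨rfl, h⟩ | ⟨rfl, h⟩ <;> linarith
    have : 0 < σ * sin α * 2 / √(2 * cos α) := by positivity
    linarith [show -σ * (2 * sin α / √(2 * cos α)) = -(σ * sin α * 2 / √(2 * cos α)) by ring]
  have hdet : 0 < 0 * (-σ * (2 * sin α / √(2 * cos α))) - -σ * (σ * 4 * cos α) := by
    rcases hσ₁ with rfl | rfl <;> linarith
  subst hr0 hω0 hJ
  refine ⟨fun μ hμ => Matrix.re_neg_of_hasEigenvalue_fin_two htr hdet hμ, ?_,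
    fun ε _ => mul_one_div ε _⟩
  obtain ⟨δ, K, c, hδ, hK, hc, hdecay⟩ := exists_exp_decay_of_hasFDerivAt htr hdet
    (gadRadialField_eq_zero hσ₁ _) (gadAngularField_eq_zero hσ₁ hcos)
    (hasFDerivAt_gadRadialField hσ₁ _) (hasFDerivAt_gadAngularField hσ₁ hcos)
  exact ⟨δ, K, c, hδ, hK, hc, fun r ω htraj => hdecay r ω fun t ht => (htraj t ht).2⟩

/-- For `cos α > 0` and `sin α ≠ 0`, the fixed point `(r0, ω0^+)` (if
`sin α > 0`) resp. `(r0, ω0^-)` (if `sin α < 0`) of the reduced system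
`ṙ = cos(ω - α)`, `ω̇ = 2r sin ω - (1/r) sin(ω - α)` is exponentially stable: both
eigenvalues of the Jacobian `J^±` have strictly negative real part, and nearby solutions
converge exponentially to it. Consequently, in the original spatial variable, the reduced
leading-order isotropic GAD admits a stable circular orbit of radius `ε/√(2 cos α)`. -/
theorem stmt17 (α : ℝ) (hcos : 0 < Real.cos α) (hsin : Real.sin α ≠ 0)
    (r0 : ℝ) (hr0 : r0 = 1 / Real.sqrt (2 * Real.cos α))
    (σ : ℝ) (hσ : (σ = 1 ∧ 0 < Real.sin α) ∨ (σ = -1 ∧ Real.sin α < 0))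
    (ω0 : ℝ) (hω0 : ω0 = α + σ * (π / 2))
    (J : Matrix (Fin 2) (Fin 2) ℝ)
    (hJ : J = !![0, -σ;
                 σ * 4 * Real.cos α, -σ * (2 * Real.sin α / Real.sqrt (2 * Real.cos α))]) :
    -- both eigenvalues of the Jacobian have strictly negative real part
    (∀ μ : ℂ, Module.End.HasEigenvalue
        (Matrix.toLin' (J.map (Complex.ofReal))) μ → μ.re < 0) ∧
    -- asymptotic (exponential) stability of the fixed point `(r0, ω0)`
    (∃ δ K c : ℝ, 0 < δ ∧ 0 < K ∧ 0 < c ∧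
      ∀ r ω : ℝ → ℝ,
        (∀ t ∈ Ici (0:ℝ), 0 < r t ∧
          HasDerivAt r (Real.cos (ω t - α)) t ∧
          HasDerivAt ω (2 * r t * Real.sin (ω t) - (r t)⁻¹ * Real.sin (ω t - α)) t) →
        |r 0 - r0| + |ω 0 - ω0| < δ →
        ∀ t ∈ Ici (0:ℝ), |r t - r0| + |ω t - ω0| ≤ K * Real.exp (-c * t)) ∧
    -- in the original (un-rescaled) spatial variable the stable orbit has radius
    -- `ε·r0 = ε/√(2 cos α)`
    (∀ ε : ℝ, 0 < ε → ε * r0 = ε / Real.sqrt (2 * Real.cos α)) :=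
  stmt17_general α hcos r0 hr0 σ hσ ω0 hω0 J hJ
end
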